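/- Let n, m ∈ ℕ with m ≤ n. Let a : {1, …, n} → ℕ be a nondecreasing function (arrival slots) and let t_1 < t_2 < … < t_m be natural numbers (service slots). Call an injective map σ : {1, …, m} → {1, …, n} a feasible schedule if a(σ(r)) ≤ t_r for every r ≤ m. Suppose σ_L is a feasible schedule with the greedy (LCFS) property: for every r ≤ m, σ_L(r) = max{ i ∈ {1, …, n} : a(i) ≤ t_r and i ∉ {σ_L(1), …, σ_L(r−1)} }. Then for every feasible schedule σ, every r ≤ m, and every j ≤ r, the j-th smallest element of {σ_L(1), …, σ_L(r)} is greater than or equal to the j-th smallest element of {σ(1), …, σ(r)}. -/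

import Mathlib

/-!
Compare the two schedules through upper tails: for every threshold `x`, among the first `r`
services LCFS has delivered at least as many samples of index `≥ x` as any feasible schedule.
This goes by induction on `r`. If the `r`-th LCFS sample is `≥ x`, the LCFS count grows by one.
Otherwise every sample `≥ x` that has arrived by `t r` was already served by LCFS, and a feasible
schedule cannot have served more samples `≥ x` than have arrived by `t r`. Finally, two finsets
of equal size whose upper tails are dominated in this way are dominated position by position in
sorted order.
-/

open Finset

namespace Finset

variable {α : Type*} [LinearOrder α] {k : ℕ}

theorem card_filter_orderEmbOfFin_le (s : Finset α) (h : #s = k) (j : Fin k) :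
    #{y ∈ s | s.orderEmbOfFin h j ≤ y} = k - j := by
  set f := s.orderEmbOfFin h
  calc #{y ∈ s | f j ≤ y} = #{y ∈ univ.map f.toEmbedding | f j ≤ y} := by
        rw [map_orderEmbOfFin_univ]
    _ = k - j := by
      rw [filter_map, card_map, ← Fin.card_Ici]
      congr 1
      ext i
      simp

theorem card_filter_orderEmbOfFin_lt (s : Finset α) (h : #s = k) (j : Fin k) :
    #{y ∈ s | s.orderEmbOfFin h j < y} = k - 1 - j := by
  set f := s.orderEmbOfFin h
  calc #{y ∈ s | f j < y} = #{y ∈ univ.map f.toEmbedding | f j < y} := by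
        rw [map_orderEmbOfFin_univ]
    _ = k - 1 - j := by
      rw [filter_map, card_map, ← Fin.card_Ioi]
      congr 1
      ext i
      simp

theorem orderEmbOfFin_le_of_card_filter_le {s t : Finset α} (hs : #s = k) (ht : #t = k)
    (h : ∀ x, #{y ∈ s | x ≤ y} ≤ #{y ∈ t | x ≤ y}) (j : Fin k) :
    s.orderEmbOfFin hs j ≤ t.orderEmbOfFin ht j := by
  by_contra! hlt
  have : k - j ≤ k - 1 - j :=
    calc k - j = #{y ∈ s | s.orderEmbOfFin hs j ≤ y} := (card_filter_orderEmbOfFin_le s hs j).symm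
      _ ≤ #{y ∈ t | s.orderEmbOfFin hs j ≤ y} := h _
      _ ≤ #{y ∈ t | t.orderEmbOfFin ht j < y} :=
        card_le_card <| monotone_filter_right t fun _ _ hy => hlt.trans_le hy
      _ = k - 1 - j := card_filter_orderEmbOfFin_lt t ht j
  omega

end Finset

theorem card_filter_Icc_one_add_one (p : ℕ → Prop) [DecidablePred p] (r : ℕ) :
    #{k ∈ Icc 1 (r + 1) | p k} = #{k ∈ Icc 1 r | p k} + if p (r + 1) then 1 else 0 := by
  rw [← insert_Icc_right_eq_Icc_add_one (by omega), filter_insert]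
  split_ifs
  · exact card_insert_of_notMem (by simp)
  · rfl

section Scheduling

variable {n m : ℕ} {a t σ σL : ℕ → ℕ}

theorem exists_served_of_greedy {s : ℕ}
    (hgreedy : ((Icc 1 n).filter
        (fun i => a i ≤ t s ∧ ∀ r' : ℕ, 1 ≤ r' → r' < s → σL r' ≠ i)).max = (σL s : WithBot ℕ))
    {i : ℕ} (hi : i ∈ Icc 1 n) (hai : a i ≤ t s) (hlt : σL s < i) :
    ∃ r', 1 ≤ r' ∧ r' < s ∧ σL r' = i := by
  by_contra! hfree
  have hmax : (i : WithBot ℕ) ≤ σL s :=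
    hgreedy ▸ le_max (mem_filter.2 ⟨hi, hai, hfree⟩)
  exact absurd (WithBot.coe_le_coe.1 hmax) (not_le.2 hlt)

theorem card_filter_le_card_available (ht : MonotoneOn t (Set.Icc 1 m))
    (hσ_inj : Set.InjOn σ (Set.Icc 1 m)) (hσ_mem : ∀ r ∈ Set.Icc 1 m, σ r ∈ Set.Icc 1 n)
    (hσ_feas : ∀ r ∈ Set.Icc 1 m, a (σ r) ≤ t r) {s : ℕ} (hs : s ≤ m) (x : ℕ) :
    #{k ∈ Icc 1 s | x ≤ σ k} ≤ #{i ∈ Icc 1 n | x ≤ i ∧ a i ≤ t s} := by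
  have hsub : ∀ k ∈ Icc 1 s, k ∈ Set.Icc 1 m := fun k hk => by
    simp only [mem_Icc, Set.mem_Icc] at hk ⊢; omega
  refine card_le_card_of_injOn σ (fun k hk => ?_) fun u hu v hv =>
    hσ_inj (hsub u (mem_filter.1 hu).1) (hsub v (mem_filter.1 hv).1)
  obtain ⟨hk, hxk⟩ := mem_filter.1 hk
  have hs1 : s ∈ Set.Icc 1 m := ⟨(mem_Icc.1 hk).1.trans (mem_Icc.1 hk).2, hs⟩
  refine mem_filter.2 ⟨mem_Icc.2 (hσ_mem k (hsub k hk)), hxk, ?_⟩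
  exact (hσ_feas k (hsub k hk)).trans (ht (hsub k hk) hs1 (mem_Icc.1 hk).2)

theorem card_available_le_of_greedy {r : ℕ}
    (hgreedy : ((Icc 1 n).filter
        (fun i => a i ≤ t (r + 1) ∧ ∀ r' : ℕ, 1 ≤ r' → r' < r + 1 → σL r' ≠ i)).max
        = (σL (r + 1) : WithBot ℕ))
    {x : ℕ} (hx : σL (r + 1) < x) :
    #{i ∈ Icc 1 n | x ≤ i ∧ a i ≤ t (r + 1)} ≤ #{k ∈ Icc 1 r | x ≤ σL k} := by
  refine card_le_card_of_surjOn σL fun i hi => ?_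
  obtain ⟨hi, hxi, hai⟩ := mem_filter.1 hi
  obtain ⟨r', h1, h2, rfl⟩ := exists_served_of_greedy hgreedy hi hai (hx.trans_le hxi)
  exact ⟨r', mem_filter.2 ⟨mem_Icc.2 ⟨h1, by omega⟩, hxi⟩, rfl⟩

theorem card_filter_le_of_greedy (ht : MonotoneOn t (Set.Icc 1 m))
    (hgreedy : ∀ r ∈ Set.Icc 1 m,
      ((Icc 1 n).filter
        (fun i => a i ≤ t r ∧ ∀ r' : ℕ, 1 ≤ r' → r' < r → σL r' ≠ i)).max = (σL r : WithBot ℕ))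
    (hσ_inj : Set.InjOn σ (Set.Icc 1 m)) (hσ_mem : ∀ r ∈ Set.Icc 1 m, σ r ∈ Set.Icc 1 n)
    (hσ_feas : ∀ r ∈ Set.Icc 1 m, a (σ r) ≤ t r) {r : ℕ} (hr : r ≤ m) (x : ℕ) :
    #{k ∈ Icc 1 r | x ≤ σ k} ≤ #{k ∈ Icc 1 r | x ≤ σL k} := by
  induction r with
  | zero => simp
  | succ r ih =>
    have ih := ih (by omega)
    rw [card_filter_Icc_one_add_one (x ≤ σL ·)]
    by_cases hx : x ≤ σL (r + 1)
    · rw [card_filter_Icc_one_add_one (x ≤ σ ·), if_pos hx]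
      split_ifs <;> omega
    · calc #{k ∈ Icc 1 (r + 1) | x ≤ σ k}
          ≤ #{i ∈ Icc 1 n | x ≤ i ∧ a i ≤ t (r + 1)} :=
            card_filter_le_card_available ht hσ_inj hσ_mem hσ_feas hr x
        _ ≤ #{k ∈ Icc 1 r | x ≤ σL k} :=
            card_available_le_of_greedy (hgreedy (r + 1) ⟨by omega, hr⟩) (not_le.1 hx)
        _ ≤ _ := Nat.le_add_right _ _

end Scheduling

theorem indices_ordering_lcfs_general (n m : ℕ)
    (a : ℕ → ℕ)
    (t : ℕ → ℕ) (ht : StrictMonoOn t (Set.Icc 1 m))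
    (σL : ℕ → ℕ)
    (hσL_inj : Set.InjOn σL (Set.Icc 1 m))
    (hσL_greedy : ∀ r ∈ Set.Icc 1 m,
      ((Finset.Icc 1 n).filter
        (fun i => a i ≤ t r ∧ ∀ r' : ℕ, 1 ≤ r' → r' < r → σL r' ≠ i)).max
        = (σL r : WithBot ℕ)) :
    ∀ (σ : ℕ → ℕ),
      Set.InjOn σ (Set.Icc 1 m) →
      (∀ r ∈ Set.Icc 1 m, σ r ∈ Set.Icc 1 n) →
      (∀ r ∈ Set.Icc 1 m, a (σ r) ≤ t r) →
      ∀ r : ℕ, r ∈ Set.Icc 1 m →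
        ∀ (j : ℕ)
          (hjL : j < (((Finset.Icc 1 r).image σL).sort (· ≤ ·)).length)
          (hjA : j < (((Finset.Icc 1 r).image σ).sort (· ≤ ·)).length),
          (((Finset.Icc 1 r).image σ).sort (· ≤ ·)).get ⟨j, hjA⟩
            ≤ (((Finset.Icc 1 r).image σL).sort (· ≤ ·)).get ⟨j, hjL⟩ := by
  intro σ hσ_inj hσ_mem hσ_feas r hr j hjL hjA
  have hinj {f : ℕ → ℕ} (hf : Set.InjOn f (Set.Icc 1 m)) : Set.InjOn f (Icc 1 r) := by
    rw [coe_Icc]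
    exact hf.mono (Set.Icc_subset_Icc_right hr.2)
  have hcard {f : ℕ → ℕ} (hf : Set.InjOn f (Set.Icc 1 m)) : #((Icc 1 r).image f) = r := by
    rw [card_image_of_injOn (hinj hf), Nat.card_Icc, Nat.add_sub_cancel]
  have hcount {f : ℕ → ℕ} (hf : Set.InjOn f (Set.Icc 1 m)) (x : ℕ) :
      #{y ∈ (Icc 1 r).image f | x ≤ y} = #{k ∈ Icc 1 r | x ≤ f k} := by
    rw [filter_image, card_image_of_injOn ((hinj hf).mono (filter_subset _ _))]
  refine orderEmbOfFin_le_of_card_filter_le (hcard hσ_inj) (hcard hσL_inj) (fun x => ?_)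
    ⟨j, by simpa [hcard hσ_inj] using hjA⟩
  rw [hcount hσ_inj, hcount hσL_inj]
  exact card_filter_le_of_greedy ht.monotoneOn hσL_greedy hσ_inj hσ_mem hσ_feas hr.2 x

/-- Lemma 6 (indices-ordering-lcfs): samples `1, …, n` arrive at slots given
by the nondecreasing function `a`; services happen at strictly increasing
slots `t 1 < … < t m`.  A schedule `σ : {1, …, m} → {1, …, n}` is feasible
if it is injective and `a (σ r) ≤ t r` for all `r`.  If `σL` is the greedy
(LCFS) feasible schedule, which at each service slot serves the available,
not-yet-served sample of largest index, then for every feasible schedule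
`σ`, every `r ≤ m` and every `j`, the `j`-th smallest element of
`{σL 1, …, σL r}` is at least the `j`-th smallest element of
`{σ 1, …, σ r}` (position-by-position comparison of the sorted lists). -/
theorem indices_ordering_lcfs (n m : ℕ) (hmn : m ≤ n)
    (a : ℕ → ℕ) (ha : MonotoneOn a (Set.Icc 1 n))
    (t : ℕ → ℕ) (ht : StrictMonoOn t (Set.Icc 1 m))
    (σL : ℕ → ℕ)
    (hσL_inj : Set.InjOn σL (Set.Icc 1 m))
    (hσL_mem : ∀ r ∈ Set.Icc 1 m, σL r ∈ Set.Icc 1 n)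
    (hσL_feas : ∀ r ∈ Set.Icc 1 m, a (σL r) ≤ t r)
    (hσL_greedy : ∀ r ∈ Set.Icc 1 m,
      ((Finset.Icc 1 n).filter
        (fun i => a i ≤ t r ∧ ∀ r' : ℕ, 1 ≤ r' → r' < r → σL r' ≠ i)).max
        = (σL r : WithBot ℕ)) :
    ∀ (σ : ℕ → ℕ),
      Set.InjOn σ (Set.Icc 1 m) →
      (∀ r ∈ Set.Icc 1 m, σ r ∈ Set.Icc 1 n) →
      (∀ r ∈ Set.Icc 1 m, a (σ r) ≤ t r) →
      ∀ r : ℕ, r ∈ Set.Icc 1 m →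
        ∀ (j : ℕ)
          (hjL : j < (((Finset.Icc 1 r).image σL).sort (· ≤ ·)).length)
          (hjA : j < (((Finset.Icc 1 r).image σ).sort (· ≤ ·)).length),
          (((Finset.Icc 1 r).image σ).sort (· ≤ ·)).get ⟨j, hjA⟩
            ≤ (((Finset.Icc 1 r).image σL).sort (· ≤ ·)).get ⟨j, hjL⟩ :=
  indices_ordering_lcfs_general n m a t ht σL hσL_inj hσL_greedy
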